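/- arXiv:math/0501157 — 4 statements merged into one kernel-verified Lean document; each statement's English description precedes it below -/
import Mathlib

section
/- The kernel of the linear evaluation map from quadratic forms in ten variables x₀,…,x₉ to forms of degree 6 in s,t,u, given by substituting x₀=s³, x₁=t³, x₂=u³, x₃=s²t, x₄=t²u, x₅=u²s, x₆=st², x₇=tu², x₈=us², x₉=stu, has dimension 27. -/
open MvPolynomial

/-! The ten substituted cubics are exactly the monomials of degree 3 in `s, t, u`, so they span
the cubic forms. Quadratic forms are spanned by products of two linear forms, hence substitution
maps them onto the span of products of two cubic forms, which is all sextic forms. Rank–nullity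
then gives `55 - 28 = 27` for the kernel. -/

namespace MvPolynomial

section CommSemiring

variable {σ τ ι R : Type*} [CommSemiring R]

lemma span_range_eq_homogeneousSubmodule {m : ℕ} {f : ι → MvPolynomial σ R}
    (hf : ∀ i, (f i).IsHomogeneous m)
    (hmon : ∀ d : σ →₀ ℕ, d.degree = m → monomial d 1 ∈ Set.range f) :
    Submodule.span R (Set.range f) = homogeneousSubmodule σ R m := by
  refine le_antisymm (Submodule.span_le.mpr ?_) ?_
  · rintro _ ⟨i, rfl⟩
    exact hf i
  · rw [homogeneousSubmodule_eq_finsupp_supported, AddMonoidAlgebra.supported_eq_span_single]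
    refine Submodule.span_mono ?_
    rintro _ ⟨d, hd, rfl⟩
    exact hmon d hd

lemma map_aeval_homogeneousSubmodule {m : ℕ} {f : σ → MvPolynomial τ R}
    (hf : Submodule.span R (Set.range f) = homogeneousSubmodule τ R m) (n : ℕ) :
    (homogeneousSubmodule σ R n).map (aeval f).toLinearMap =
      homogeneousSubmodule τ R (m * n) := by
  rw [← homogeneousSubmodule_one_pow, homogeneousSubmodule_one_eq_span_X, Submodule.map_pow,
    Submodule.map_span, ← Set.range_comp]
  simp only [AlgHom.toLinearMap_apply, Function.comp_def, aeval_X]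
  rw [hf, ← homogeneousSubmodule_one_pow, ← pow_mul, homogeneousSubmodule_one_pow]

end CommSemiring

lemma finrank_homogeneousSubmodule (σ K : Type*) [Fintype σ] [Field K] (n : ℕ) :
    Module.finrank K (homogeneousSubmodule σ K n) = (Fintype.card σ + n - 1).choose n := by
  classical
  let S : Set (σ →₀ ℕ) := {d | d.degree = n}
  let eS : Sym σ n ≃ S :=
    (Sym.equivNatSum σ n).trans (Equiv.subtypeEquivRight fun d => Iff.rfl)
  have : Fintype S := Fintype.ofEquiv _ eS
  let e : homogeneousSubmodule σ K n ≃ₗ[K] (S →₀ K) :=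
    (LinearEquiv.ofEq _ _ (homogeneousSubmodule_eq_finsupp_supported σ K n)).trans
      (AddMonoidAlgebra.supportedEquivFinsupp S)
  rw [e.finrank_eq, Module.finrank_finsupp_self, ← Fintype.card_congr eS,
    Sym.card_sym_eq_choose]

end MvPolynomial

noncomputable def cubicMonomials (R : Type*) [CommSemiring R] : Fin 10 → MvPolynomial (Fin 3) R :=
  ![X 0 ^ 3, X 1 ^ 3, X 2 ^ 3, X 0 ^ 2 * X 1, X 1 ^ 2 * X 2, X 2 ^ 2 * X 0, X 0 * X 1 ^ 2,
    X 1 * X 2 ^ 2, X 2 * X 0 ^ 2, X 0 * X 1 * X 2]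

def cubicExponents : Fin 10 → Fin 3 → ℕ :=
  ![![3, 0, 0], ![0, 3, 0], ![0, 0, 3], ![2, 1, 0], ![0, 2, 1], ![1, 0, 2], ![1, 2, 0],
    ![0, 1, 2], ![2, 0, 1], ![1, 1, 1]]

lemma cubicMonomials_eq_prod (R : Type*) [CommSemiring R] (i : Fin 10) :
    cubicMonomials R i = ∏ j, X j ^ cubicExponents i j := by
  fin_cases i <;> simp [cubicMonomials, cubicExponents, Fin.prod_univ_three] <;> ring

lemma exists_cubicExponents_eq :
    ∀ a < 4, ∀ b < 4, ∀ c < 4, a + b + c = 3 → ∃ i, cubicExponents i = ![a, b, c] := by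
  decide

lemma sum_cubicExponents (i : Fin 10) : ∑ j, cubicExponents i j = 3 := by
  fin_cases i <;> rfl

lemma monomial_mem_range_cubicMonomials (R : Type*) [CommSemiring R] (d : Fin 3 →₀ ℕ)
    (hd : d.degree = 3) : monomial d 1 ∈ Set.range (cubicMonomials R) := by
  rw [Finsupp.degree_eq_sum, Fin.sum_univ_three] at hd
  obtain ⟨i, hi⟩ :=
    exists_cubicExponents_eq (d 0) (by omega) (d 1) (by omega) (d 2) (by omega) hd
  refine ⟨i, ?_⟩
  rw [cubicMonomials_eq_prod, monomial_eq, C_1, one_mul, Finsupp.prod_fintype _ _ (by simp), hi]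
  simp [Fin.prod_univ_three]

lemma span_range_cubicMonomials (R : Type*) [CommSemiring R] :
    Submodule.span R (Set.range (cubicMonomials R)) = homogeneousSubmodule (Fin 3) R 3 := by
  refine span_range_eq_homogeneousSubmodule (fun i ↦ ?_) (monomial_mem_range_cubicMonomials R)
  rw [cubicMonomials_eq_prod]
  simpa only [sum_cubicExponents] using
    IsHomogeneous.prod Finset.univ _ _ fun j _ ↦ isHomogeneous_X_pow j (cubicExponents i j)

/-- The kernel of the evaluation map from quadratic forms in `x₀,…,x₉` to sextic forms in
`s,t,u`, given by substituting the ten cubic monomials, has dimension 27. -/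
theorem kernel_of_substitution_dim_27 :
    let s : MvPolynomial (Fin 3) ℚ := X 0
    let t : MvPolynomial (Fin 3) ℚ := X 1
    let u : MvPolynomial (Fin 3) ℚ := X 2
    let f : Fin 10 → MvPolynomial (Fin 3) ℚ :=
      ![s^3, t^3, u^3, s^2*t, t^2*u, u^2*s, s*t^2, t*u^2, u*s^2, s*t*u]
    let φ : (homogeneousSubmodule (Fin 10) ℚ 2) →ₗ[ℚ] MvPolynomial (Fin 3) ℚ :=
      (aeval f).toLinearMap ∘ₗ (homogeneousSubmodule (Fin 10) ℚ 2).subtype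
    Module.finrank ℚ (LinearMap.ker φ) = 27 := by
  intro s t u f φ
  have : Module.Finite ℚ (homogeneousSubmodule (Fin 10) ℚ 2) :=
    Module.Finite.iff_fg.mpr (homogeneousSubmodule_fg _ _ 2)
  have hrange : LinearMap.range φ = homogeneousSubmodule (Fin 3) ℚ 6 := by
    rw [LinearMap.range_comp, Submodule.range_subtype]
    exact map_aeval_homogeneousSubmodule (span_range_cubicMonomials ℚ) 2
  have hrank := LinearMap.finrank_range_add_finrank_ker φ
  rw [hrange, finrank_homogeneousSubmodule, finrank_homogeneousSubmodule] at hrank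
  change 28 + _ = 55 at hrank
  omega
end

section
/- Let A be a symmetric n×n real matrix, X an n×n real matrix, and W a subspace of symmetric matrices containing A with XᵀB + BX ∈ W for all B ∈ W. For t ∈ ℝ, exp(tX)ᵀ A exp(tX) lies in the affine span described as follows: if XᵀAᵢ + AᵢX = Σⱼ λᵢⱼAⱼ for a basis A₁,…,A_m of W with Λ = (λᵢⱼ), then exp(tX)ᵀ Aᵢ exp(tX) = Σⱼ exp(tΛ)ᵢⱼ Aⱼ. -/
/-!
Write `L_a` and `R_b` for left multiplication by `a` and right multiplication by `b` in a Banach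
algebra. They commute, and `exp L_a = L_{exp a}`, `exp R_b = R_{exp b}`, so
`exp a * c * exp b = exp (L_a + R_b) c`. For `a = (tX)ᵀ`, `b = tX` the operator `L_a + R_b` maps
`Aᵢ` to `Σⱼ (tΛ)ᵢⱼ Aⱼ`; its powers then act on the family through the powers of `tΛ`, and summing
the exponential series gives `exp (L_a + R_b) Aᵢ = Σⱼ exp(tΛ)ᵢⱼ Aⱼ`.
-/

open Matrix
open NormedSpace ContinuousLinearMap

theorem Module.End.pow_apply_eq_sum_of_apply_eq_sum {R M ι : Type*} [CommSemiring R]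
    [AddCommMonoid M] [Module R M] [Fintype ι] [DecidableEq ι] (T : Module.End R M) (A : ι → M)
    (Λ : Matrix ι ι R) (hT : ∀ i, T (A i) = ∑ j, Λ i j • A j) (k : ℕ) (i : ι) :
    (T ^ k) (A i) = ∑ j, (Λ ^ k) i j • A j := by
  induction k generalizing i with
  | zero => simp [Matrix.one_apply, ite_smul]
  | succ k ih =>
    rw [pow_succ, Module.End.mul_apply, hT, map_sum, pow_succ']
    simp only [map_smul, ih, Finset.smul_sum, smul_smul]
    rw [Finset.sum_comm]
    simp only [← Finset.sum_smul, Matrix.mul_apply]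

section

variable {𝕜 𝔸 E : Type*} [RCLike 𝕜] [NormedRing 𝔸] [NormedAlgebra 𝕜 𝔸] [CompleteSpace 𝔸]
  [NormedAddCommGroup E] [NormedSpace 𝕜 E] [CompleteSpace E]

theorem map_exp_eq_exp_apply_of_map_pow (Φ : 𝔸 →L[𝕜] E) (T : E →L[𝕜] E) {a : 𝔸} {v : E}
    (h : ∀ k, Φ (a ^ k) = (T ^ k) v) : Φ (exp a) = exp T v := by
  simp only [exp_eq_tsum 𝕜]
  rw [Φ.map_tsum (expSeries_summable' a), ← apply_apply v,
    (apply 𝕜 E v).map_tsum (expSeries_summable' T)]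
  simp only [map_smul, h, apply_apply]

theorem exp_mul_apply (a y : 𝔸) : exp (mul 𝕜 𝔸 a) y = exp a * y := by
  refine (map_exp_eq_exp_apply_of_map_pow ((mul 𝕜 𝔸).flip y) _ fun k => ?_).symm
  induction k with
  | zero => simp
  | succ k ih => rw [pow_succ', pow_succ', mul_apply_eq_comp, ← ih]; simp [mul_assoc]

theorem exp_flip_mul_apply (b y : 𝔸) : exp ((mul 𝕜 𝔸).flip b) y = y * exp b := by
  refine (map_exp_eq_exp_apply_of_map_pow (mul 𝕜 𝔸 y) _ fun k => ?_).symm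
  induction k with
  | zero => simp
  | succ k ih => rw [pow_succ, pow_succ', mul_apply_eq_comp, ← ih]; simp [mul_assoc]

theorem exp_mul_mul_exp (a b c : 𝔸) :
    exp a * c * exp b = exp (mul 𝕜 𝔸 a + (mul 𝕜 𝔸).flip b) c := by
  let +nondep : NormedAlgebra ℚ (𝔸 →L[𝕜] 𝔸) := .restrictScalars ℚ 𝕜 _
  have hcomm : Commute (mul 𝕜 𝔸 a) ((mul 𝕜 𝔸).flip b) :=
    ext fun x => (mul_assoc a x b).symm
  rw [exp_add_of_commute hcomm, mul_apply_eq_comp, exp_flip_mul_apply, exp_mul_apply, mul_assoc]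

theorem exp_apply_eq_sum_of_apply_eq_sum {ι : Type*} [Fintype ι] [DecidableEq ι] (T : E →L[𝕜] E)
    (A : ι → E) (Λ : Matrix ι ι 𝕜) (hT : ∀ i, T (A i) = ∑ j, Λ i j • A j) (i : ι) :
    exp T (A i) = ∑ j, exp Λ i j • A j := by
  -- `exp Λ` depends only on the topology of the matrices, so any operator norm may be used.
  let : NormedRing (Matrix ι ι 𝕜) := Matrix.linftyOpNormedRing
  let : NormedAlgebra 𝕜 (Matrix ι ι 𝕜) := Matrix.linftyOpNormedAlgebra
  have : @CompleteSpace (Matrix ι ι 𝕜) PseudoMetricSpace.toUniformSpace :=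
    FiniteDimensional.complete 𝕜 _
  let Φ : Matrix ι ι 𝕜 →L[𝕜] E :=
    ((Fintype.linearCombination 𝕜 A).comp (LinearMap.proj i)).toContinuousLinearMap
  have hΦ : ∀ M, Φ M = ∑ j, M i j • A j := fun M => Fintype.linearCombination_apply 𝕜 A (M i)
  have hpow : ∀ k, Φ (Λ ^ k) = (T ^ k) (A i) := fun k => by
    rw [hΦ, ← Module.End.pow_apply_eq_sum_of_apply_eq_sum (T : Module.End 𝕜 E) A Λ hT,
      ← toLinearMap_pow]
    rfl
  calc exp T (A i) = Φ (exp Λ) := (map_exp_eq_exp_apply_of_map_pow Φ T hpow).symm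
    _ = ∑ j, exp Λ i j • A j := hΦ _

end

theorem exp_conjugate_symmetric_family_general
    {n m : ℕ}
    (A : Fin m → Matrix (Fin n) (Fin n) ℝ)
    (X : Matrix (Fin n) (Fin n) ℝ)
    (Λ : Matrix (Fin m) (Fin m) ℝ)
    (hΛ : ∀ i, Xᵀ * A i + A i * X = ∑ j, Λ i j • A j)
    (t : ℝ) (i : Fin m) :
    (NormedSpace.exp (t • X))ᵀ * A i * NormedSpace.exp (t • X) =
      ∑ j, (NormedSpace.exp (t • Λ)) i j • A j := by
  let : NormedRing (Matrix (Fin n) (Fin n) ℝ) := Matrix.linftyOpNormedRing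
  let : NormedAlgebra ℝ (Matrix (Fin n) (Fin n) ℝ) := Matrix.linftyOpNormedAlgebra
  have hL : ∀ j, (mul ℝ _ (t • X)ᵀ + (mul ℝ _).flip (t • X)) (A j) = ∑ k, (t • Λ) j k • A k := by
    intro j
    simp [hΛ, Finset.smul_sum, smul_smul, ← smul_add]
  rw [← exp_transpose]
  exact (exp_mul_mul_exp _ _ (A i)).trans (exp_apply_eq_sum_of_apply_eq_sum _ A _ hL i)

/-- If `Xᵀ Aᵢ + Aᵢ X = Σⱼ Λᵢⱼ Aⱼ` for a basis `A₁,…,A_m` of a space of symmetric matrices,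
then `exp(tX)ᵀ Aᵢ exp(tX) = Σⱼ exp(tΛ)ᵢⱼ Aⱼ`. -/
theorem exp_conjugate_symmetric_family
    {n m : ℕ}
    (A : Fin m → Matrix (Fin n) (Fin n) ℝ)
    (hsym : ∀ i, (A i)ᵀ = A i)
    (hind : LinearIndependent ℝ A)
    (X : Matrix (Fin n) (Fin n) ℝ)
    (Λ : Matrix (Fin m) (Fin m) ℝ)
    (hΛ : ∀ i, Xᵀ * A i + A i * X = ∑ j, Λ i j • A j)
    (t : ℝ) (i : Fin m) :
    (NormedSpace.exp (t • X))ᵀ * A i * NormedSpace.exp (t • X) =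
      ∑ j, (NormedSpace.exp (t • Λ)) i j • A j :=
  exp_conjugate_symmetric_family_general A X Λ hΛ t i
end

section
/- Let A be a 9-dimensional associative unital algebra over ℚ whose associated Lie algebra A_Lie decomposes as K ⊕ Z, where K is an 8-dimensional simple Lie subalgebra and Z is spanned by the identity of A. Then A is a central simple associative algebra over ℚ. -/
attribute [local instance 100] LieRing.ofAssociativeRing

/-!
Since `A = K ⊕ F·1` and `1` is central, `K` is a Lie ideal of `A`, so a two-sided ideal `I` of `A`
meets `K` in `0` or in `K`. In the first case every element of `I` commutes with `K`, hence is a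
scalar because the center of `K` is trivial; this also shows that the center of `A` is `F·1`.
In the second case `K ⊆ I`, and unless `1 ∈ I` this forces `K` to be closed under multiplication.
That is impossible: `K` is perfect, so `tr(L_x) = 0` for `x ∈ K`, and closure under multiplication
makes the trace form `tr(L_x L_y) = tr(L_{xy})` of `K` acting on `A` by left multiplication vanish.
Cartan's criterion then makes every `L_x`, hence every `x ∈ K`, nilpotent, and by Engel's theorem
`K` is a nilpotent Lie algebra, contradicting simplicity.
-/

section

open LieAlgebra LieModule

lemma LieAlgebra.IsSimple.derivedSeries_one_eq_top (R L : Type*) [CommRing R] [LieRing L]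
    [LieAlgebra R L] [IsSimple R L] : derivedSeries R L 1 = ⊤ := by
  refine (IsSimple.eq_bot_or_eq_top _).resolve_left fun h => IsSimple.non_abelian R (L := L) ⟨?_⟩
  intro x y
  have : ⁅x, y⁆ ∈ derivedSeries R L 1 :=
    LieSubmodule.lie_mem_lie (LieSubmodule.mem_top x) (LieSubmodule.mem_top y)
  rwa [h, LieSubmodule.mem_bot] at this

variable {F A : Type*} [Field F] [Ring A] [Algebra F A]

lemma LieSubalgebra.trace_mulLeft_eq_zero (K : LieSubalgebra F A) [IsSimple F K] {x : A}
    (hx : x ∈ K) : LinearMap.trace F A (LinearMap.mulLeft F x) = 0 := by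
  let φ : K →ₗ[F] F :=
    LinearMap.trace F A ∘ₗ (Algebra.lmul F A).toLinearMap ∘ₗ K.toSubmodule.subtype
  have hφ : (derivedSeries F K 1 : Submodule F K) ≤ LinearMap.ker φ := by
    rw [coe_derivedSeries_one_eq, Submodule.span_le]
    rintro _ ⟨a, b, rfl⟩
    change LinearMap.trace F A (Algebra.lmul F A ⁅(a : A), b⁆) = 0
    rw [Ring.lie_def, map_sub, map_mul, map_mul, map_sub, LinearMap.trace_mul_comm, sub_self]
  have hx' : (⟨x, hx⟩ : K) ∈ derivedSeries F K 1 := by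
    rw [IsSimple.derivedSeries_one_eq_top]
    exact LieSubmodule.mem_top _
  exact hφ hx'

lemma LieSubalgebra.isNilpotent_of_mul_mem [CharZero F] [FiniteDimensional F A]
    (K : LieSubalgebra F A) [IsSimple F K]
    (hmul : ∀ x ∈ K, ∀ y ∈ K, x * y ∈ K) {x : A} (hx : x ∈ K) : IsNilpotent x := by
  let ρ : K →ₗ⁅F⁆ Module.End F A := (Algebra.lmul F A).toLieHom.comp K.incl
  have htrace : traceForm F ρ.range A = 0 := by
    ext ⟨_, a, rfl⟩ ⟨_, b, rfl⟩
    change LinearMap.trace F A (LinearMap.mulLeft F a ∘ₗ LinearMap.mulLeft F b) = 0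
    rw [← LinearMap.mulLeft_mul]
    exact K.trace_mulLeft_eq_zero (hmul a a.2 b b.2)
  have hmem : ρ.rangeRestrict ⟨x, hx⟩ ∈ derivedSeries F ρ.range 1 := by
    rw [← LieIdeal.derivedSeries_map_eq 1 ρ.surjective_rangeRestrict,
      IsSimple.derivedSeries_one_eq_top]
    exact LieIdeal.mem_map (LieSubmodule.mem_top _)
  rw [← LinearMap.isNilpotent_mulLeft_iff F]
  exact (isNilpotent_iff_forall' (R := F)).mp
    (isNilpotent_derivedSeries_of_traceForm_eq_zero htrace) ⟨_, hmem⟩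

lemma LieSubalgebra.exists_mul_notMem [CharZero F] [FiniteDimensional F A]
    (K : LieSubalgebra F A) [IsSimple F K] :
    ∃ x ∈ K, ∃ y ∈ K, x * y ∉ K := by
  by_contra! hmul
  have : LieRing.IsNilpotent K := (LieAlgebra.isNilpotent_iff_forall (R := F)).mpr fun x =>
    isNilpotent_ad_of_isNilpotent (K.isNilpotent_of_mul_mem hmul x.2)
  have := IsSimple.nontrivial F K
  exact (LieSubmodule.nontrivial_iff_ne_bot F K K).mp
    (non_trivial_center_of_isNilpotent (R := F) (L := K)) (center_eq_bot F K)

variable (F) in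
def TwoSidedIdeal.toLieIdeal (I : TwoSidedIdeal A) : LieIdeal F A where
  carrier := I
  add_mem' := I.add_mem
  zero_mem' := I.zero_mem
  smul_mem' c x hx := by
    rw [Algebra.smul_def]
    exact I.mul_mem_left _ _ hx
  lie_mem {x _} hm := by
    rw [Ring.lie_def]
    exact I.sub_mem (I.mul_mem_left x _ hm) (I.mul_mem_right _ x hm)

lemma TwoSidedIdeal.eq_top_of_algebraMap_mem {I : TwoSidedIdeal A} {c : F} (hc : c ≠ 0)
    (h : algebraMap F A c ∈ I) : I = ⊤ := by
  refine I.eq_top ?_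
  simpa [← map_mul, inv_mul_cancel₀ hc] using I.mul_mem_left (algebraMap F A c⁻¹) _ h

lemma TwoSidedIdeal.eq_bot_or_eq_top_of_forall_mem_eq_algebraMap {I : TwoSidedIdeal A}
    (h : ∀ a ∈ I, ∃ c : F, a = algebraMap F A c) : I = ⊥ ∨ I = ⊤ := by
  refine or_iff_not_imp_left.mpr fun hI => ?_
  obtain ⟨a, ha, ha0⟩ : ∃ a ∈ I, a ≠ 0 := by
    by_contra! h0
    exact hI (eq_bot_iff.mpr fun a ha => (TwoSidedIdeal.mem_bot _).mpr (h0 a ha))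
  obtain ⟨c, rfl⟩ := h a ha
  exact eq_top_of_algebraMap_mem (by rintro rfl; simp at ha0) ha

lemma lie_algebraMap (x : A) (c : F) : ⁅x, algebraMap F A c⁆ = 0 := by
  rw [Ring.lie_def, Algebra.commutes, sub_self]

namespace LieSubalgebra

variable {K : LieSubalgebra F A} (hK : K.toSubmodule ⊔ Submodule.span F {(1 : A)} = ⊤)
include hK

lemma exists_eq_add_algebraMap (a : A) : ∃ k ∈ K, ∃ c : F, a = k + algebraMap F A c := by
  obtain ⟨k, hk, z, hz, rfl⟩ := Submodule.mem_sup.mp (hK ▸ Submodule.mem_top : a ∈ _)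
  obtain ⟨c, rfl⟩ := Submodule.mem_span_singleton.mp hz
  exact ⟨k, hk, c, by rw [Algebra.algebraMap_eq_smul_one]⟩

lemma lie_mem_of_sup_span_one_eq_top {x : A} (hx : x ∈ K) (a : A) : ⁅x, a⁆ ∈ K := by
  obtain ⟨k, hk, c, rfl⟩ := exists_eq_add_algebraMap hK a
  rw [lie_add, lie_algebraMap, add_zero]
  exact K.lie_mem hx hk

lemma eq_algebraMap_of_forall_lie_eq_zero [HasTrivialRadical F K] {a : A}
    (ha : ∀ x ∈ K, ⁅x, a⁆ = 0) : ∃ c : F, a = algebraMap F A c := by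
  obtain ⟨k, hk, c, rfl⟩ := exists_eq_add_algebraMap hK a
  suffices (⟨k, hk⟩ : K) ∈ center F K by
    rw [center_eq_bot, LieSubmodule.mem_bot] at this
    exact ⟨c, by rw [show k = 0 from congrArg Subtype.val this, zero_add]⟩
  intro x
  ext
  simpa [lie_algebraMap] using ha x x.2

lemma mul_mem_of_le_twoSidedIdeal {I : TwoSidedIdeal A} (hI : I ≠ ⊤) (hKI : ∀ x ∈ K, x ∈ I)
    {x : A} (hx : x ∈ K) (y : A) : x * y ∈ K := by
  obtain ⟨k, hk, c, hxy⟩ := exists_eq_add_algebraMap hK (x * y)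
  have hc : algebraMap F A c ∈ I := by
    rw [eq_sub_of_add_eq' hxy.symm]
    exact I.sub_mem (I.mul_mem_right _ _ (hKI x hx)) (hKI k hk)
  obtain rfl : c = 0 := by_contra fun hc0 => hI (TwoSidedIdeal.eq_top_of_algebraMap_mem hc0 hc)
  simpa [hxy] using hk

lemma twoSidedIdeal_eq_bot_or_eq_top [CharZero F] [FiniteDimensional F A] [IsSimple F K]
    (I : TwoSidedIdeal A) : I = ⊥ ∨ I = ⊤ := by
  rcases IsSimple.eq_bot_or_eq_top ((I.toLieIdeal F).comap K.incl) with hIK | hIK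
  · refine TwoSidedIdeal.eq_bot_or_eq_top_of_forall_mem_eq_algebraMap fun a ha =>
      eq_algebraMap_of_forall_lie_eq_zero hK fun x hx => ?_
    have : (⟨⁅x, a⁆, lie_mem_of_sup_span_one_eq_top hK hx a⟩ : K) ∈
        (I.toLieIdeal F).comap K.incl :=
      (I.toLieIdeal F).lie_mem ha
    rw [hIK, LieSubmodule.mem_bot] at this
    exact congrArg Subtype.val this
  · by_contra! h
    have hKI : ∀ x ∈ K, x ∈ I := fun x hx =>
      (hIK ▸ LieSubmodule.mem_top _ : (⟨x, hx⟩ : K) ∈ (I.toLieIdeal F).comap K.incl)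
    obtain ⟨x, hx, y, -, hxy⟩ := K.exists_mul_notMem
    exact hxy (mul_mem_of_le_twoSidedIdeal hK h.2 hKI hx y)

end LieSubalgebra

end

theorem central_simple_of_lie_decomposition_general
    (A : Type*) [Ring A] [Algebra ℚ A]
    (hdim : Module.finrank ℚ A = 9)
    (K : LieSubalgebra ℚ A)
    (hKsimple : LieAlgebra.IsSimple ℚ K)
    (hcompl : IsCompl K.toSubmodule (Submodule.span ℚ {(1 : A)})) :
    (∀ I : TwoSidedIdeal A, I = ⊥ ∨ I = ⊤) ∧
    (∀ z : A, (∀ a : A, z * a = a * z) → ∃ q : ℚ, z = algebraMap ℚ A q) := by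
  have : FiniteDimensional ℚ A := Module.finite_of_finrank_eq_succ hdim
  refine ⟨LieSubalgebra.twoSidedIdeal_eq_bot_or_eq_top hcompl.sup_eq_top, fun z hz => ?_⟩
  refine LieSubalgebra.eq_algebraMap_of_forall_lie_eq_zero hcompl.sup_eq_top fun x _ => ?_
  rw [Ring.lie_def, hz x, sub_self]

/-- If `A` is a 9-dimensional associative unital ℚ-algebra whose Lie algebra decomposes
as `K ⊕ Z` with `K` an 8-dimensional simple Lie subalgebra and `Z` spanned by the identity,
then `A` is central simple over ℚ. -/
theorem central_simple_of_lie_decomposition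
    (A : Type*) [Ring A] [Algebra ℚ A]
    (hdim : Module.finrank ℚ A = 9)
    (K : LieSubalgebra ℚ A)
    (hK : Module.finrank ℚ K = 8)
    (hKsimple : LieAlgebra.IsSimple ℚ K)
    (hcompl : IsCompl K.toSubmodule (Submodule.span ℚ {(1 : A)})) :
    (∀ I : TwoSidedIdeal A, I = ⊥ ∨ I = ⊤) ∧
    (∀ z : A, (∀ a : A, z * a = a * z) → ∃ q : ℚ, z = algebraMap ℚ A q) :=
  central_simple_of_lie_decomposition_general A hdim K hKsimple hcompl
end

section
/- Let A be a central simple algebra over ℚ and x ∈ A an element such that [[t,x],x] = 0 for all t ∈ A. Then the three linear endomorphisms of A given by y ↦ yx², y ↦ xyx, y ↦ x²y are linearly dependent; consequently, if x has irreducible cubic minimal polynomial, there exists t ∈ A with [[t,x],x] ≠ 0. -/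
/-- In a central simple algebra `A` over ℚ: if `[[t,x],x] = 0` for all `t`, then the maps
`y ↦ yx²`, `y ↦ xyx`, `y ↦ x²y` are linearly dependent; consequently, if `x` has an
irreducible cubic minimal polynomial, then some `t` satisfies `[[t,x],x] ≠ 0`. -/
theorem double_commutator_nonzero
    {A : Type*} [Ring A] [Algebra ℚ A] [Nontrivial A]
    (hsimple : ∀ I : TwoSidedIdeal A, I = ⊥ ∨ I = ⊤)
    (hcentral : ∀ z : A, (∀ a : A, z * a = a * z) → ∃ q : ℚ, z = algebraMap ℚ A q)
    (x : A) :
    ((∀ t : A, (t * x - x * t) * x - x * (t * x - x * t) = 0) →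
      ¬ LinearIndependent ℚ
        ![LinearMap.mulRight ℚ (x ^ 2),
          (LinearMap.mulLeft ℚ x).comp (LinearMap.mulRight ℚ x),
          LinearMap.mulLeft ℚ (x ^ 2)]) ∧
    (Irreducible (minpoly ℚ x) → (minpoly ℚ x).natDegree = 3 →
      ∃ t : A, (t * x - x * t) * x - x * (t * x - x * t) ≠ 0) := by
  constructor
  · intro h hli
    rw [Fintype.linearIndependent_iff] at hli
    have := hli ![1, -2, 1] ?_ 0
    · simp at this
    · apply LinearMap.ext
      intro y
      have hy := h y
      simp [Fin.sum_univ_three, LinearMap.mulRight_apply, LinearMap.mulLeft_apply]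
      have hy2 : y * x ^ 2 - x * (y * x) - x * (y * x) + x ^ 2 * y = 0 := by
        linear_combination (norm := noncomm_ring) hy
      rw [two_smul]
      linear_combination (norm := noncomm_ring) hy2
  · intro _ hdeg
    by_contra hc
    push_neg at hc
    -- deduce x is central
    have hcomm : ∀ a : A, x * a = a * x := by
      by_contra hnc
      push_neg at hnc
      obtain ⟨t, ht⟩ := hnc
      set a := t * x - x * t with ha
      have ha0 : a ≠ 0 := by
        intro h0; apply ht; rw [ha] at h0; linear_combination (norm := noncomm_ring) -h0
      -- d(u)d(v) = 0 for all u v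
      have hdd : ∀ u v : A, (u * x - x * u) * (v * x - x * v) = 0 := by
        intro u v
        have h1 := hc (u * v)
        have h2 := hc u
        have h3 := hc v
        have key : (2 : ℚ) • ((u * x - x * u) * (v * x - x * v)) = 0 := by
          rw [two_smul]
          linear_combination (norm := noncomm_ring) h1 - u * h3 - h2 * v
        have := smul_eq_zero.mp key
        rcases this with h | h
        · norm_num at h
        · exact h
      -- a * w * d(v) = 0 for all w v
      have haw : ∀ w v : A, a * (w * (v * x - x * v)) = 0 := by
        intro w v
        have h1 := hdd t (w * v)
        have h2 := hdd t w
        rw [← ha] at h1 h2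
        linear_combination (norm := noncomm_ring) h1 - h2 * v
      -- the ideal J = {b | ∀ u, a * u * b = 0}
      let J : TwoSidedIdeal A := TwoSidedIdeal.mk'
        {b | ∀ u : A, a * (u * b) = 0}
        (by intro u; simp)
        (by intro b c hb hc u; rw [mul_add, mul_add, hb u, hc u, add_zero])
        (by intro b hb u; rw [mul_neg, mul_neg, hb u, neg_zero])
        (by intro c b hb u; rw [show a * (u * (c * b)) = a * ((u * c) * b) by noncomm_ring, hb (u * c)])
        (by intro b c hb u; rw [show a * (u * (b * c)) = (a * (u * b)) * c by noncomm_ring, hb u, zero_mul])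
      have haJ : a ∈ J := by
        rw [TwoSidedIdeal.mem_mk']
        intro u
        exact haw u t
      have hJ : J = ⊤ := by
        rcases hsimple J with h | h
        · exfalso; rw [h] at haJ; exact ha0 (by simpa using haJ)
        · exact h
      have h1J : (1 : A) ∈ J := by rw [hJ]; trivial
      rw [TwoSidedIdeal.mem_mk'] at h1J
      have := h1J 1
      simp at this
      exact ha0 this
    obtain ⟨q, hq⟩ := hcentral x hcomm
    have : minpoly ℚ x = Polynomial.X - Polynomial.C q := by
      rw [hq]
      exact minpoly.eq_X_sub_C A q
    rw [this] at hdeg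
    simp at hdeg
end
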